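/- The two-player example game with a bi-dimensional action space for player 1 does not possess a perfect monotone equilibrium: no strategy profile of this game is simultaneously a monotone equilibrium and perfect. -/

import Mathlib

/-!
Statement 17 (Claim 2, part 4): the two-player example game with a bi-dimensional action
space for player 1 does not possess a perfect monotone equilibrium: no strategy profile is
simultaneously a monotone equilibrium and perfect.
-/

open MeasureTheory Filter Metric

namespace MonotonePerfection

noncomputable section

/-- One binary coordinate {0,1} of player 1's action space. -/
abbrev B2 : Type := {a : ℕ // a ≤ 1}

/-- Player 1's bi-dimensional action space {0,1} × {0,1} with the coordinatewise order. -/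
abbrev A1sp : Type := B2 × B2

/-- Player 2's binary action space {1,2}. -/
abbrev Act12 : Type := {a : ℕ // a = 1 ∨ a = 2}

/-- The type space [0,1]. -/
abbrev T01 : Type := ↥(Set.Icc (0:ℝ) 1)

/-- Lebesgue (= uniform) measure on [0,1]. -/
noncomputable def μ01 : Measure T01 := (volume : Measure ℝ).comap Subtype.val

/-- Player 1's payoff in the bi-dimensional example game. -/
noncomputable def w1 (a1 : A1sp) (a2 : Act12) (t1 t2 : ℝ) : ℝ :=
  if a1.1.1 = 0 then
    (if a1.2.1 = 0 then (if a2.1 = 1 then 2 else -t2/2)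
     else (if a2.1 = 1 then 41/24 + t2/6 else 2 - t2))
  else
    (if a1.2.1 = 0 then (if t1 ≤ 1/2 then -7 else 7)
     else (if a2.1 = 1 then (if t1 ≤ 1/2 then -29/4 else 27/4)
           else (if t1 ≤ 1/2 then -21/4 else 35/4)))

/-- Player 2's payoff in the bi-dimensional example game, depending only on the actions. -/
noncomputable def w2 (a1 : A1sp) (a2 : Act12) : ℝ :=
  if a1.1.1 = 1 ∧ a1.2.1 = 1 then (if a2.1 = 1 then 7 else -1)
  else (if a2.1 = 1 then -1 else 1)

/-- Player 1's interim payoff against a pure strategy of player 2 (types are independent and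
uniform on [0,1]). -/
noncomputable def W1p (a : A1sp) (t1 : T01) (s2 : T01 → Act12) : ℝ :=
  ∫ t2 : T01, w1 a (s2 t2) (t1 : ℝ) (t2 : ℝ) ∂μ01

/-- Player 2's interim payoff against a pure strategy of player 1. -/
noncomputable def W2p (a : Act12) (t2 : T01) (s1 : T01 → A1sp) : ℝ :=
  ∫ t1 : T01, w2 (s1 t1) a ∂μ01

/-- The Prohorov distance between two Borel measures. -/
noncomputable def prohorovDist {Ω : Type*} [MeasurableSpace Ω] [PseudoMetricSpace Ω]
    (μ ν : Measure Ω) : ℝ :=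
  sInf {ε : ℝ |
    ∀ B : Set Ω, MeasurableSet B →
      μ B ≤ ν (Metric.thickening ε B) + ENNReal.ofReal ε ∧
      ν B ≤ μ (Metric.thickening ε B) + ENNReal.ofReal ε}

/-- A mixed strategy with values in a finite action space. -/
def IsMixed {X : Type*} [MeasurableSpace X] (g : T01 → Measure X) : Prop :=
  (∀ t, IsProbabilityMeasure (g t)) ∧
  ∀ B : Set X, MeasurableSet B → Measurable fun t => g t B

/-- A completely mixed strategy: every action gets positive probability at every type. -/
def IsCompletelyMixed {X : Type*} [MeasurableSpace X] (g : T01 → Measure X) : Prop :=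
  ∀ (t : T01) (a : X), 0 < g t {a}

/-- Player 1's interim payoff against a mixed strategy of player 2. -/
noncomputable def W1 (a : A1sp) (t1 : T01) (g2 : T01 → Measure Act12) : ℝ :=
  ∫ t2 : T01, ∫ a2, w1 a a2 (t1 : ℝ) (t2 : ℝ) ∂(g2 t2) ∂μ01

/-- Player 2's interim payoff against a mixed strategy of player 1. -/
noncomputable def W2 (a : Act12) (t2 : T01) (g1 : T01 → Measure A1sp) : ℝ :=
  ∫ t1 : T01, ∫ a1, w2 a1 a ∂(g1 t1) ∂μ01

/-- Player 1's best responses. -/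
def BR1 (t1 : T01) (g2 : T01 → Measure Act12) : Set A1sp :=
  {a | ∀ a', W1 a' t1 g2 ≤ W1 a t1 g2}

/-- Player 2's best responses. -/
def BR2 (t2 : T01) (g1 : T01 → Measure A1sp) : Set Act12 :=
  {a | ∀ a', W2 a' t2 g1 ≤ W2 a t2 g1}

/-- Bayesian Nash equilibrium of the bi-dimensional example game. -/
def IsBNE2 (s1 : T01 → A1sp) (s2 : T01 → Act12) : Prop :=
  (∀ᵐ t1 ∂μ01, s1 t1 ∈ BR1 t1 fun t => Measure.dirac (s2 t)) ∧
  (∀ᵐ t2 ∂μ01, s2 t2 ∈ BR2 t2 fun t => Measure.dirac (s1 t))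

/-- A perfect strategy profile of the bi-dimensional example game. -/
def IsPerfect2 (s1 : T01 → A1sp) (s2 : T01 → Act12) : Prop :=
  ∃ (G1 : ℕ → T01 → Measure A1sp) (G2 : ℕ → T01 → Measure Act12),
    (∀ k, IsMixed (G1 k) ∧ IsMixed (G2 k) ∧
      IsCompletelyMixed (G1 k) ∧ IsCompletelyMixed (G2 k)) ∧
    (∀ᵐ t1 ∂μ01,
      Filter.Tendsto (fun k => prohorovDist (G1 k t1) (Measure.dirac (s1 t1)))
        Filter.atTop (nhds 0) ∧
      Filter.Tendsto (fun k => Metric.infDist (s1 t1) (BR1 t1 (G2 k)))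
        Filter.atTop (nhds 0)) ∧
    (∀ᵐ t2 ∂μ01,
      Filter.Tendsto (fun k => prohorovDist (G2 k t2) (Measure.dirac (s2 t2)))
        Filter.atTop (nhds 0) ∧
      Filter.Tendsto (fun k => Metric.infDist (s2 t2) (BR2 t2 (G1 k)))
        Filter.atTop (nhds 0))
/-! ### Auxiliary infrastructure -/

section Aux

open Set

/-- Named actions. -/
def act1 : Act12 := ⟨1, Or.inl rfl⟩
def act2 : Act12 := ⟨2, Or.inr rfl⟩
def b0 : B2 := ⟨0, by norm_num⟩
def b1 : B2 := ⟨1, by norm_num⟩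
def a00 : A1sp := (b0, b0)
def a01 : A1sp := (b0, b1)
def a10 : A1sp := (b1, b0)
def a11 : A1sp := (b1, b1)

lemma act_cases (a : Act12) : a = act1 ∨ a = act2 := by
  rcases a with ⟨a, h | h⟩
  · left; exact Subtype.ext h
  · right; exact Subtype.ext h

lemma b2_cases (b : B2) : b = b0 ∨ b = b1 := by
  rcases b with ⟨b, hb⟩
  interval_cases b
  · left; rfl
  · right; rfl

lemma a1_cases (a : A1sp) : a = a00 ∨ a = a01 ∨ a = a10 ∨ a = a11 := by
  rcases b2_cases a.1 with h1 | h1 <;> rcases b2_cases a.2 with h2 | h2 <;>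
    [skip; skip; skip; skip] <;>
    [left; (right;left); (right;right;left); (right;right;right)] <;>
    · rw [show a = (a.1, a.2) from rfl, h1, h2]; rfl

instance : Finite B2 := (Set.finite_Iic (1:ℕ)).to_subtype
instance : Finite A1sp := inferInstance

lemma A1sp_eq_of_dist_lt {x y : A1sp} (h : dist x y < 1) : x = y := by
  by_contra hne
  have h1 : x.1 = y.1 ∧ x.2 = y.2 → False := fun ⟨e1, e2⟩ => hne (Prod.ext e1 e2)
  have key : ∀ u v : B2, u ≠ v → (1:ℝ) ≤ dist u v := by
    intro u v huv
    rw [Subtype.dist_eq]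
    exact Nat.pairwise_one_le_dist (fun h => huv (Subtype.ext h))
  rw [Prod.dist_eq] at h
  rcases eq_or_ne x.1 y.1 with e1 | e1
  · rcases eq_or_ne x.2 y.2 with e2 | e2
    · exact h1 ⟨e1, e2⟩
    · exact absurd (lt_of_le_of_lt (le_trans (key _ _ e2) (le_max_right _ _)) h) (by norm_num)
  · exact absurd (lt_of_le_of_lt (le_trans (key _ _ e1) (le_max_left _ _)) h) (by norm_num)

/-- basic facts about μ01 -/
lemma μ01_apply (s : Set T01) : μ01 s = volume (Subtype.val '' s) :=
  (MeasurableEmbedding.subtype_coe measurableSet_Icc).comap_apply volume s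

instance : IsProbabilityMeasure μ01 := by
  constructor
  rw [μ01_apply, Set.image_univ, Subtype.range_coe]
  simp

lemma integ (f : ℝ → ℝ) : ∫ t : T01, f t.val ∂μ01 = ∫ x in Set.Icc (0:ℝ) 1, f x :=
  integral_subtype_comap measurableSet_Icc f

lemma μ01_val_eq_zero (c : ℝ) : μ01 {t : T01 | (t:ℝ) = c} = 0 := by
  rw [μ01_apply]
  have hsub : Subtype.val '' {t : T01 | (t:ℝ) = c} ⊆ {c} := by
    rintro x ⟨t, ht, rfl⟩; exact ht
  exact le_antisymm (le_trans (measure_mono hsub) (by simp)) zero_le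

lemma μ01_gt_half : μ01 {t : T01 | 1/2 < (t:ℝ)} = ENNReal.ofReal (1/2) := by
  rw [μ01_apply]
  have : Subtype.val '' {t : T01 | 1/2 < (t:ℝ)} = Set.Ioc (1/2 : ℝ) 1 := by
    ext x
    constructor
    · rintro ⟨t, ht, rfl⟩; exact ⟨ht, t.2.2⟩
    · rintro ⟨h1, h2⟩; exact ⟨⟨x, ⟨by linarith, h2⟩⟩, h1, rfl⟩
  rw [this, Real.volume_Ioc]; norm_num

lemma μ01_le_half : μ01 {t : T01 | (t:ℝ) ≤ 1/2} = ENNReal.ofReal (1/2) := by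
  rw [μ01_apply]
  have : Subtype.val '' {t : T01 | (t:ℝ) ≤ 1/2} = Set.Icc (0:ℝ) (1/2) := by
    ext x
    constructor
    · rintro ⟨t, ht, rfl⟩; exact ⟨t.2.1, ht⟩
    · rintro ⟨h1, h2⟩; exact ⟨⟨x, ⟨by linarith, by linarith⟩⟩, h2, rfl⟩
  rw [this, Real.volume_Icc]; norm_num

lemma meas_val : Measurable fun t : T01 => (t:ℝ) := measurable_subtype_coe

lemma measurableSet_gt_half : MeasurableSet {t : T01 | 1/2 < (t:ℝ)} :=
  measurableSet_lt measurable_const meas_val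

lemma measurableSet_le_half : MeasurableSet {t : T01 | (t:ℝ) ≤ 1/2} :=
  measurableSet_le meas_val measurable_const

end Aux
section Aux2

open Set

lemma two_point_integral (ν : Measure Act12) [IsProbabilityMeasure ν] (f : Act12 → ℝ) :
    ∫ a, f a ∂ν = (ν {act1}).toReal * f act1 + (1 - (ν {act1}).toReal) * f act2 := by
  have hf : f = fun a => Set.indicator {act1} (fun _ => f act1 - f act2) a + f act2 := by
    funext a
    rcases act_cases a with h | h <;> subst h
    · rw [Set.indicator_of_mem (Set.mem_singleton _)]; ring
    · rw [Set.indicator_of_notMem (by simp [act1, act2])]; ring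
  conv_lhs => rw [hf]
  rw [integral_add ((integrable_const _).indicator (measurableSet_singleton act1))
    (integrable_const _)]
  rw [integral_indicator_const _ (measurableSet_singleton act1), integral_const]
  simp [smul_eq_mul]
  simp only [Measure.real]
  ring

lemma piecewise_int (c : ℝ) (h0 : 0 ≤ c) (h1 : c ≤ 1) (f g : ℝ → ℝ)
    (hf : Continuous f) (hg : Continuous g) :
    ∫ x in Set.Icc (0:ℝ) 1, (if x ≤ c then f x else g x) =
      (∫ x in (0:ℝ)..c, f x) + ∫ x in c..1, g x := by
  rw [setIntegral_congr_set Ioc_ae_eq_Icc.symm]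
  have h2 : Set.Ioc (0:ℝ) 1 = Set.Ioc 0 c ∪ Set.Ioc c 1 := (Set.Ioc_union_Ioc_eq_Ioc h0 h1).symm
  have hdisj : Disjoint (Set.Ioc (0:ℝ) c) (Set.Ioc c 1) := by
    rw [Set.disjoint_iff_inter_eq_empty, Set.Ioc_inter_Ioc, max_eq_right h0, min_eq_left h1]
    exact Set.Ioc_self c
  have i1 : IntegrableOn (fun x => if x ≤ c then f x else g x) (Set.Ioc 0 c) volume :=
    (hf.integrableOn_Ioc).congr_fun (fun x hx => (if_pos hx.2).symm) measurableSet_Ioc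
  have i2 : IntegrableOn (fun x => if x ≤ c then f x else g x) (Set.Ioc c 1) volume :=
    (hg.integrableOn_Ioc).congr_fun (fun x hx => (if_neg (not_le.mpr hx.1)).symm) measurableSet_Ioc
  rw [h2, setIntegral_union hdisj measurableSet_Ioc i1 i2]
  rw [setIntegral_congr_fun measurableSet_Ioc (fun x hx => if_pos hx.2),
    setIntegral_congr_fun measurableSet_Ioc (fun x (hx : x ∈ Set.Ioc c 1) => if_neg (not_le.mpr hx.1)),
    intervalIntegral.integral_of_le h0, intervalIntegral.integral_of_le h1]

lemma integ_const (c : ℝ) : ∫ _ : T01, c ∂μ01 = c := by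
  rw [integral_const]; simp

lemma integ_val : ∫ t : T01, (t:ℝ) ∂μ01 = 1/2 := by
  rw [integ (fun x => x), setIntegral_congr_set Ioc_ae_eq_Icc.symm,
    ← intervalIntegral.integral_of_le (by norm_num)]
  simp

lemma integ_psi :
    ∫ t : T01, (if (t:ℝ) ≤ 7/8 then 7/12 - 2*(t:ℝ)/3 else 0) ∂μ01 = 49/192 := by
  rw [integ (fun x => if x ≤ 7/8 then 7/12 - 2*x/3 else 0),
    piecewise_int (7/8) (by norm_num) (by norm_num) _ _ (by fun_prop) (by fun_prop)]
  rw [intervalIntegral.integral_sub intervalIntegrable_const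
    ((by fun_prop : Continuous fun x : ℝ => 2*x/3).intervalIntegrable 0 (7/8))]
  have : ∫ x in (0:ℝ)..(7/8), 2*x/3 = 2/3 * ∫ x in (0:ℝ)..(7/8), x := by
    rw [← intervalIntegral.integral_const_mul]; congr 1; funext x; ring
  rw [intervalIntegral.integral_const, this, integral_id]
  simp; norm_num

lemma integ_step :
    ∫ t : T01, (if (t:ℝ) ≤ 1/2 then (-2:ℝ) else 8) ∂μ01 = 3 := by
  rw [integ (fun x => if x ≤ 1/2 then (-2:ℝ) else 8),
    piecewise_int (1/2) (by norm_num) (by norm_num) _ _ continuous_const continuous_const]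
  rw [intervalIntegral.integral_const, intervalIntegral.integral_const]
  norm_num

lemma integrable_bdd {f : T01 → ℝ} (C : ℝ) (hm : Measurable f) (h : ∀ t, |f t| ≤ C) :
    Integrable f μ01 :=
  (integrable_const C).mono' hm.aestronglyMeasurable
    (Filter.Eventually.of_forall fun t => by rw [Real.norm_eq_abs]; exact h t)

end Aux2
section W1eval

open Set

/-- value lemmas for w1 -/
lemma w1_a00_1 (t1 t2 : ℝ) : w1 a00 act1 t1 t2 = 2 := rfl
lemma w1_a00_2 (t1 t2 : ℝ) : w1 a00 act2 t1 t2 = -t2/2 := rfl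
lemma w1_a01_1 (t1 t2 : ℝ) : w1 a01 act1 t1 t2 = 41/24 + t2/6 := rfl
lemma w1_a01_2 (t1 t2 : ℝ) : w1 a01 act2 t1 t2 = 2 - t2 := rfl
lemma w1_a10 (a2 : Act12) (t1 t2 : ℝ) : w1 a10 a2 t1 t2 = if t1 ≤ 1/2 then -7 else 7 := by
  rcases act_cases a2 with h | h <;> subst h <;> rfl
lemma w1_a11_1 (t1 t2 : ℝ) : w1 a11 act1 t1 t2 = if t1 ≤ 1/2 then -29/4 else 27/4 := rfl
lemma w1_a11_2 (t1 t2 : ℝ) : w1 a11 act2 t1 t2 = if t1 ≤ 1/2 then -21/4 else 35/4 := rfl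

variable {g2 : T01 → Measure Act12}

/-- the probability that g2 assigns to action 1 -/
noncomputable def alph (g2 : T01 → Measure Act12) (t : T01) : ℝ := (g2 t {act1}).toReal

lemma alph_nonneg (t : T01) : 0 ≤ alph g2 t := ENNReal.toReal_nonneg

lemma alph_le_one (hprob : ∀ t, IsProbabilityMeasure (g2 t)) (t : T01) : alph g2 t ≤ 1 := by
  have := hprob t
  have h := prob_le_one (μ := g2 t) (s := {act1})
  calc alph g2 t ≤ (1 : ENNReal).toReal := ENNReal.toReal_mono ENNReal.one_ne_top h
  _ = 1 := by simp

lemma W1_eq (hprob : ∀ t, IsProbabilityMeasure (g2 t)) (a : A1sp) (t1 : T01) :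
    W1 a t1 g2 = ∫ t2 : T01,
      (alph g2 t2 * w1 a act1 (t1:ℝ) (t2:ℝ) + (1 - alph g2 t2) * w1 a act2 (t1:ℝ) (t2:ℝ)) ∂μ01 := by
  unfold W1
  apply integral_congr_ae
  filter_upwards with t2
  exact @two_point_integral (g2 t2) (hprob t2) _

lemma w1_bdd (a : A1sp) (a2 : Act12) (t1 : ℝ) (t2 : T01) : |w1 a a2 t1 (t2:ℝ)| ≤ 9 := by
  have h1 := t2.2.1
  have h2 := t2.2.2
  rw [abs_le]
  constructor <;> (unfold w1; split_ifs <;> linarith)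

lemma W1_integrand_meas (hmeas : Measurable (alph g2)) (a : A1sp) (t1 : T01) :
    Measurable fun t2 : T01 =>
      (alph g2 t2 * w1 a act1 (t1:ℝ) (t2:ℝ) + (1 - alph g2 t2) * w1 a act2 (t1:ℝ) (t2:ℝ)) := by
  have hw : ∀ a2 : Act12, Measurable fun t2 : T01 => w1 a a2 (t1:ℝ) (t2:ℝ) := by
    intro a2
    unfold w1
    split_ifs <;> fun_prop
  exact ((hmeas.mul (hw act1)).add ((measurable_const.sub hmeas).mul (hw act2)))

lemma W1_integrand_int (hprob : ∀ t, IsProbabilityMeasure (g2 t)) (hmeas : Measurable (alph g2))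
    (a : A1sp) (t1 : T01) :
    Integrable (fun t2 : T01 =>
      (alph g2 t2 * w1 a act1 (t1:ℝ) (t2:ℝ) + (1 - alph g2 t2) * w1 a act2 (t1:ℝ) (t2:ℝ))) μ01 := by
  apply integrable_bdd 9 (W1_integrand_meas hmeas a t1)
  intro t
  have h0 := alph_nonneg (g2 := g2) t
  have h1 := alph_le_one hprob t
  have b1 := w1_bdd a act1 (t1:ℝ) t
  have b2 := w1_bdd a act2 (t1:ℝ) t
  rw [abs_le] at *
  constructor <;> nlinarith [b1.1, b1.2, b2.1, b2.2]

end W1eval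
section W1eval2

open Set

variable {g2 : T01 → Measure Act12}

lemma alph_integrable (hprob : ∀ t, IsProbabilityMeasure (g2 t)) (hmeas : Measurable (alph g2)) :
    Integrable (alph g2) μ01 :=
  integrable_bdd 1 hmeas fun t => abs_le.mpr ⟨by linarith [alph_nonneg (g2 := g2) t],
    alph_le_one hprob t⟩

lemma alphphi_integrable (hprob : ∀ t, IsProbabilityMeasure (g2 t))
    (hmeas : Measurable (alph g2)) :
    Integrable (fun t : T01 => alph g2 t * (55/24 - 2*(t:ℝ)/3)) μ01 := by
  apply integrable_bdd 3 (by fun_prop)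
  intro t
  have h0 := alph_nonneg (g2 := g2) t
  have h1 := alph_le_one hprob t
  have h2 := t.2.1; have h3 := t.2.2
  rw [abs_le]; constructor <;> nlinarith

lemma W1_a10_low (hprob : ∀ t, IsProbabilityMeasure (g2 t)) {t1 : T01} (h : (t1:ℝ) ≤ 1/2) :
    W1 a10 t1 g2 = -7 := by
  rw [W1_eq hprob a10 t1, show (fun t2 : T01 =>
      (alph g2 t2 * w1 a10 act1 (t1:ℝ) (t2:ℝ) + (1 - alph g2 t2) * w1 a10 act2 (t1:ℝ) (t2:ℝ)))
      = fun _ : T01 => (-7 : ℝ) from funext fun t2 => by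
        rw [w1_a10, w1_a10, if_pos h]; ring]
  exact integ_const _

lemma W1_a10_high (hprob : ∀ t, IsProbabilityMeasure (g2 t)) {t1 : T01} (h : ¬ (t1:ℝ) ≤ 1/2) :
    W1 a10 t1 g2 = 7 := by
  rw [W1_eq hprob a10 t1, show (fun t2 : T01 =>
      (alph g2 t2 * w1 a10 act1 (t1:ℝ) (t2:ℝ) + (1 - alph g2 t2) * w1 a10 act2 (t1:ℝ) (t2:ℝ)))
      = fun _ : T01 => (7 : ℝ) from funext fun t2 => by
        rw [w1_a10, w1_a10, if_neg h]; ring]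
  exact integ_const _

lemma W1_a11_low (hprob : ∀ t, IsProbabilityMeasure (g2 t)) (hmeas : Measurable (alph g2))
    {t1 : T01} (h : (t1:ℝ) ≤ 1/2) :
    W1 a11 t1 g2 ≤ -21/4 := by
  rw [W1_eq hprob a11 t1]
  calc ∫ t2 : T01, (alph g2 t2 * w1 a11 act1 (t1:ℝ) (t2:ℝ)
        + (1 - alph g2 t2) * w1 a11 act2 (t1:ℝ) (t2:ℝ)) ∂μ01
      ≤ ∫ _ : T01, (-21/4 : ℝ) ∂μ01 := by
        apply integral_mono (W1_integrand_int hprob hmeas a11 t1) (integrable_const _)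
        intro t2
        have h0 := alph_nonneg (g2 := g2) t2
        simp only [w1_a11_1, w1_a11_2, if_pos h]
        nlinarith
    _ = -21/4 := integ_const _

lemma W1_a00_low (hprob : ∀ t, IsProbabilityMeasure (g2 t)) (hmeas : Measurable (alph g2))
    (t1 : T01) :
    -1/2 ≤ W1 a00 t1 g2 := by
  rw [W1_eq hprob a00 t1]
  calc (-1/2 : ℝ) = ∫ _ : T01, (-1/2 : ℝ) ∂μ01 := (integ_const _).symm
    _ ≤ _ := by
        apply integral_mono (integrable_const _) (W1_integrand_int hprob hmeas a00 t1)
        intro t2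
        have h0 := alph_nonneg (g2 := g2) t2
        have h1 := alph_le_one hprob t2
        have h2 := t2.2.1; have h3 := t2.2.2
        simp only [w1_a00_1, w1_a00_2]
        nlinarith

lemma W1_a01_ge_one (hprob : ∀ t, IsProbabilityMeasure (g2 t)) (hmeas : Measurable (alph g2))
    (t1 : T01) :
    1 ≤ W1 a01 t1 g2 := by
  rw [W1_eq hprob a01 t1]
  calc (1 : ℝ) = ∫ _ : T01, (1 : ℝ) ∂μ01 := (integ_const _).symm
    _ ≤ _ := by
        apply integral_mono (integrable_const _) (W1_integrand_int hprob hmeas a01 t1)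
        intro t2
        have h0 := alph_nonneg (g2 := g2) t2
        have h1 := alph_le_one hprob t2
        have h2 := t2.2.1; have h3 := t2.2.2
        simp only [w1_a01_1, w1_a01_2]
        nlinarith

lemma W1_a00_le_two (hprob : ∀ t, IsProbabilityMeasure (g2 t)) (hmeas : Measurable (alph g2))
    (t1 : T01) :
    W1 a00 t1 g2 ≤ 2 := by
  rw [W1_eq hprob a00 t1]
  calc _ ≤ ∫ _ : T01, (2 : ℝ) ∂μ01 := by
        apply integral_mono (W1_integrand_int hprob hmeas a00 t1) (integrable_const _)
        intro t2
        have h0 := alph_nonneg (g2 := g2) t2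
        have h1 := alph_le_one hprob t2
        have h2 := t2.2.1; have h3 := t2.2.2
        simp only [w1_a00_1, w1_a00_2]
        nlinarith
    _ = 2 := integ_const _

lemma W1_a01_le_two (hprob : ∀ t, IsProbabilityMeasure (g2 t)) (hmeas : Measurable (alph g2))
    (t1 : T01) :
    W1 a01 t1 g2 ≤ 2 := by
  rw [W1_eq hprob a01 t1]
  calc _ ≤ ∫ _ : T01, (2 : ℝ) ∂μ01 := by
        apply integral_mono (W1_integrand_int hprob hmeas a01 t1) (integrable_const _)
        intro t2
        have h0 := alph_nonneg (g2 := g2) t2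
        have h1 := alph_le_one hprob t2
        have h2 := t2.2.1; have h3 := t2.2.2
        simp only [w1_a01_1, w1_a01_2]
        nlinarith
    _ = 2 := integ_const _

lemma W1_a11_high (hprob : ∀ t, IsProbabilityMeasure (g2 t)) (hmeas : Measurable (alph g2))
    {t1 : T01} (h : ¬ (t1:ℝ) ≤ 1/2) :
    W1 a11 t1 g2 = 35/4 - 2 * ∫ t, alph g2 t ∂μ01 := by
  rw [W1_eq hprob a11 t1, show (fun t2 : T01 =>
      (alph g2 t2 * w1 a11 act1 (t1:ℝ) (t2:ℝ) + (1 - alph g2 t2) * w1 a11 act2 (t1:ℝ) (t2:ℝ)))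
      = fun t2 : T01 => (35/4 : ℝ) - 2 * alph g2 t2 from funext fun t2 => by
        rw [w1_a11_1, w1_a11_2, if_neg h, if_neg h]; ring]
  rw [integral_sub (integrable_const _) ((alph_integrable hprob hmeas).const_mul 2),
    integ_const, integral_const_mul]

lemma integ_two_sub : ∫ t : T01, (2 - (t:ℝ)/2) ∂μ01 = 7/4 := by
  rw [integral_sub (integrable_const _) ((integrable_bdd 1 meas_val
    (fun t => abs_le.mpr ⟨by linarith [t.2.1], t.2.2⟩)).div_const 2), integ_const,
    integral_div, integ_val]
  norm_num

lemma W1_diff_low (hprob : ∀ t, IsProbabilityMeasure (g2 t)) (hmeas : Measurable (alph g2))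
    (t1 : T01) :
    W1 a01 t1 g2 - W1 a00 t1 g2
      = 7/4 - ∫ t, alph g2 t * (55/24 - 2*(t:ℝ)/3) ∂μ01 := by
  rw [W1_eq hprob a01 t1, W1_eq hprob a00 t1,
    ← integral_sub (W1_integrand_int hprob hmeas a01 t1) (W1_integrand_int hprob hmeas a00 t1)]
  have : (fun t2 : T01 =>
      (alph g2 t2 * w1 a01 act1 (t1:ℝ) (t2:ℝ) + (1 - alph g2 t2) * w1 a01 act2 (t1:ℝ) (t2:ℝ))
      - (alph g2 t2 * w1 a00 act1 (t1:ℝ) (t2:ℝ) + (1 - alph g2 t2) * w1 a00 act2 (t1:ℝ) (t2:ℝ)))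
      = fun t2 : T01 => (2 - (t2:ℝ)/2) - alph g2 t2 * (55/24 - 2*(t2:ℝ)/3) := by
    funext t2
    rw [w1_a01_1, w1_a01_2, w1_a00_1, w1_a00_2]
    ring
  rw [this, integral_sub (integrable_bdd 2 (by fun_prop)
    (fun t => abs_le.mpr ⟨by linarith [t.2.1, t.2.2], by linarith [t.2.1]⟩))
    (alphphi_integrable hprob hmeas), integ_two_sub]

end W1eval2
section Strict

open Set

variable {g2 : T01 → Measure Act12}

lemma act1_ne_act2 : act1 ≠ act2 := by
  intro h
  have := congrArg Subtype.val h
  simp [act1, act2] at this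

lemma alph_sum (hprob : ∀ t, IsProbabilityMeasure (g2 t)) (t : T01) :
    (g2 t {act1}).toReal + (g2 t {act2}).toReal = 1 := by
  have := hprob t
  have hu : ({act1} : Set Act12) ∪ {act2} = Set.univ := by
    ext a; rcases act_cases a with h | h <;> simp [h]
  have h1 : g2 t ({act1} ∪ {act2}) = 1 := by rw [hu]; exact measure_univ
  rw [measure_union (Set.disjoint_singleton.mpr act1_ne_act2) (measurableSet_singleton _)] at h1
  rw [← ENNReal.toReal_add (measure_ne_top _ _) (measure_ne_top _ _), h1]
  simp

lemma alph_pos (hprob : ∀ t, IsProbabilityMeasure (g2 t)) (hcm : IsCompletelyMixed g2)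
    (t : T01) : 0 < alph g2 t := by
  have := hprob t
  exact ENNReal.toReal_pos (hcm t act1).ne' (measure_ne_top _ _)

lemma alph_lt_one (hprob : ∀ t, IsProbabilityMeasure (g2 t)) (hcm : IsCompletelyMixed g2)
    (t : T01) : alph g2 t < 1 := by
  have h2 : 0 < (g2 t {act2}).toReal := by have := hprob t; exact ENNReal.toReal_pos (hcm t act2).ne' (measure_ne_top _ _)
  have := alph_sum hprob t
  unfold alph
  linarith

lemma key_strict (hprob : ∀ t, IsProbabilityMeasure (g2 t)) (hmeas : Measurable (alph g2))
    (hcm : IsCompletelyMixed g2) (hq : ∫ t, alph g2 t ∂μ01 = 7/8) :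
    ∫ t, alph g2 t * (55/24 - 2*(t:ℝ)/3) ∂μ01 < 7/4 := by
  set ψ : T01 → ℝ := fun t => if (t:ℝ) ≤ 7/8 then 7/12 - 2*(t:ℝ)/3 else 0 with hψ
  set δ : T01 → ℝ := fun t => ψ t - alph g2 t * ((55/24 - 2*(t:ℝ)/3) - 41/24) with hδ
  have hψmeas : Measurable ψ := by
    apply Measurable.ite (measurableSet_le meas_val measurable_const) <;> fun_prop
  have hψint : Integrable ψ μ01 := by
    apply integrable_bdd 1 hψmeas
    intro t
    have h2 := t.2.1; have h3 := t.2.2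
    rw [abs_le, hψ]
    constructor <;> (simp only []; split_ifs <;> linarith)
  have hαφc_int : Integrable (fun t : T01 => alph g2 t * ((55/24 - 2*(t:ℝ)/3) - 41/24)) μ01 := by
    apply integrable_bdd 3 (by fun_prop)
    intro t
    have h0 := alph_nonneg (g2 := g2) t
    have h1 := alph_le_one hprob t
    have h2 := t.2.1; have h3 := t.2.2
    rw [abs_le]; constructor <;> nlinarith
  have hδint : Integrable δ μ01 := hψint.sub hαφc_int
  have hδ0 : ∀ t, 0 ≤ δ t := by
    intro t
    have h0 := alph_nonneg (g2 := g2) t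
    have h1 := (alph_lt_one hprob hcm t).le
    have h2 := t.2.1; have h3 := t.2.2
    rw [hδ]
    simp only [hψ]
    rcases le_or_gt ((t:ℝ)) (7/8) with h | h
    · rw [if_pos h]; nlinarith
    · rw [if_neg (not_le.mpr h)]; nlinarith
  have hδpos : ∀ t : T01, (t:ℝ) ≠ 7/8 → 0 < δ t := by
    intro t ht
    have h0 := alph_pos hprob hcm t
    have h1 := alph_lt_one hprob hcm t
    have h2 := t.2.1; have h3 := t.2.2
    rw [hδ]; simp only [hψ]
    rcases lt_or_gt_of_ne ht with h | h
    · rw [if_pos h.le]; nlinarith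
    · rw [if_neg (not_le.mpr h)]; nlinarith
  have hsupp : {t : T01 | (t:ℝ) ≠ 7/8} ⊆ Function.support δ := fun t ht => (hδpos t ht).ne'
  have hμsupp : 0 < μ01 (Function.support δ) := by
    rcases eq_or_ne (μ01 (Function.support δ)) 0 with h | h
    · exfalso
      have hcover : (Set.univ : Set T01) ⊆ Function.support δ ∪ {t : T01 | (t:ℝ) = 7/8} := by
        intro t _
        rcases eq_or_ne ((t:ℝ)) (7/8) with he | he
        · exact Or.inr he
        · exact Or.inl (hsupp he)
      have hle : μ01 (Set.univ : Set T01) ≤ μ01 (Function.support δ) + μ01 {t : T01 | (t:ℝ) = 7/8} :=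
        le_trans (measure_mono hcover) (measure_union_le _ _)
      rw [measure_univ, h, μ01_val_eq_zero] at hle
      simp at hle
    · exact h.bot_lt
  have hI : 0 < ∫ t, δ t ∂μ01 :=
    (integral_pos_iff_support_of_nonneg hδ0 hδint).mpr hμsupp
  have hsplit : ∫ t, δ t ∂μ01 = (∫ t, ψ t ∂μ01) -
      ∫ t, alph g2 t * ((55/24 - 2*(t:ℝ)/3) - 41/24) ∂μ01 :=
    integral_sub hψint hαφc_int
  have hexp : ∫ t, alph g2 t * ((55/24 - 2*(t:ℝ)/3) - 41/24) ∂μ01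
      = (∫ t, alph g2 t * (55/24 - 2*(t:ℝ)/3) ∂μ01) - 41/24 * ∫ t, alph g2 t ∂μ01 := by
    rw [← integral_const_mul, ← integral_sub (alphphi_integrable hprob hmeas)
      ((alph_integrable hprob hmeas).const_mul _)]
    congr 1; funext t; ring
  have hψval : ∫ t, ψ t ∂μ01 = 49/192 := integ_psi
  rw [hsplit, hexp, hψval, hq] at hI
  linarith
end Strict
section BRfacts

open Set Filter Metric

instance : Nonempty A1sp := ⟨a00⟩

lemma BR1_nonempty (t : T01) (g2 : T01 → Measure Act12) : (BR1 t g2).Nonempty := by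
  obtain ⟨a, ha⟩ := Finite.exists_max (fun a : A1sp => W1 a t g2)
  exact ⟨a, ha⟩

lemma eventually_mem_BR1 {x : A1sp} {t : T01} {G2 : ℕ → T01 → Measure Act12}
    (h : Tendsto (fun k => infDist x (BR1 t (G2 k))) atTop (nhds 0)) :
    ∀ᶠ k in atTop, x ∈ BR1 t (G2 k) := by
  filter_upwards [h.eventually (gt_mem_nhds one_pos)] with k hk
  obtain ⟨a, ha, hadist⟩ := (infDist_lt_iff (BR1_nonempty t (G2 k))).mp hk
  exact (A1sp_eq_of_dist_lt hadist) ▸ ha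

/-- The dirac strategy of player 2 -/
lemma dirac_prob (s2 : T01 → Act12) (t : T01) :
    IsProbabilityMeasure (Measure.dirac (s2 t)) := inferInstance

lemma alph_dirac (s2 : T01 → Act12) (t : T01) :
    alph (fun t => Measure.dirac (s2 t)) t = if s2 t = act1 then 1 else 0 := by
  unfold alph
  rw [Measure.dirac_apply' _ (measurableSet_singleton act1)]
  rcases eq_or_ne (s2 t) act1 with h | h
  · rw [if_pos h, Set.indicator_of_mem (by simpa using h)]; simp
  · rw [if_neg h, Set.indicator_of_notMem (by simpa using h)]; simp

lemma alph_dirac_meas {s2 : T01 → Act12} (hs2 : Measurable s2) :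
    Measurable (alph fun t => Measure.dirac (s2 t)) := by
  have : (alph fun t => Measure.dirac (s2 t))
      = (fun a : Act12 => if a = act1 then (1:ℝ) else 0) ∘ s2 := by
    funext t; rw [alph_dirac]; rfl
  rw [this]
  exact (measurable_of_countable _).comp hs2

/-- W2 against a dirac strategy of player 1 -/
lemma W2_dirac (a : Act12) (t2 : T01) (s1 : T01 → A1sp) :
    W2 a t2 (fun t => Measure.dirac (s1 t)) = ∫ t1, w2 (s1 t1) a ∂μ01 := by
  unfold W2
  apply integral_congr_ae
  filter_upwards with t1
  exact integral_dirac (fun a1 => w2 a1 a) (s1 t1)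

lemma D1_eq (b : A1sp) : w2 b act1 - w2 b act2 = if b = a11 then 8 else -2 := by
  rcases a1_cases b with h | h | h | h <;> subst h <;>
    norm_num [w2, a00, a01, a10, a11, b0, b1, act1, act2]

lemma W2_diff {s1 : T01 → A1sp} (hs1 : Measurable s1) (t2 : T01) :
    W2 act1 t2 (fun t => Measure.dirac (s1 t)) - W2 act2 t2 (fun t => Measure.dirac (s1 t))
      = ∫ t1, (if s1 t1 = a11 then (8:ℝ) else -2) ∂μ01 := by
  rw [W2_dirac, W2_dirac, ← integral_sub]
  · apply integral_congr_ae
    filter_upwards with t1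
    exact D1_eq (s1 t1)
  · exact integrable_bdd 7 (show Measurable fun t1 => w2 (s1 t1) act1 from (measurable_of_countable (fun b => w2 b act1)).comp hs1)
      (fun t => by rcases a1_cases (s1 t) with h | h | h | h <;> rw [h] <;>
        norm_num [w2, a00, a01, a10, a11, b0, b1, act1, act2])
  · exact integrable_bdd 7 (show Measurable fun t1 => w2 (s1 t1) act2 from (measurable_of_countable (fun b => w2 b act2)).comp hs1)
      (fun t => by rcases a1_cases (s1 t) with h | h | h | h <;> rw [h] <;>
        norm_num [w2, a00, a01, a10, a11, b0, b1, act1, act2])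

end BRfacts
section MainProof

open Set Filter Metric

lemma exists_good {S : Set T01} (hS : μ01 S ≠ 0) {P : T01 → Prop} (hP : ∀ᵐ t : T01 ∂μ01, P t) :
    ∃ t ∈ S, P t := by
  by_contra h
  push_neg at h
  have hsub : S ⊆ {t : T01 | ¬ P t} := fun t ht => h t ht
  exact hS (le_antisymm (le_trans (measure_mono hsub) (le_of_eq (ae_iff.mp hP))) zero_le)

lemma a10_ne_a11 : a10 ≠ a11 := by
  intro h
  have := congrArg (fun x : A1sp => (x.2 : ℕ)) h
  simp [a10, a11, b0, b1] at this

lemma not_a01_le_a10 : ¬ (a01 ≤ a10) := by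
  intro h
  have h2 : (a01.2 : ℕ) ≤ (a10.2 : ℕ) := h.2
  simp [a01, a10, b0, b1] at h2

lemma gt_half_ne_zero : μ01 {t : T01 | 1/2 < (t:ℝ)} ≠ 0 := by
  rw [μ01_gt_half]
  exact (ENNReal.ofReal_pos.mpr (by norm_num)).ne'

lemma le_half_ne_zero : μ01 {t : T01 | (t:ℝ) ≤ 1/2} ≠ 0 := by
  rw [μ01_le_half]
  exact (ENNReal.ofReal_pos.mpr (by norm_num)).ne'

theorem main_aux :
    ¬ ∃ (s1 : T01 → A1sp) (s2 : T01 → Act12),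
        Measurable s1 ∧ Measurable s2 ∧ Monotone s1 ∧ Monotone s2 ∧
        IsBNE2 s1 s2 ∧ IsPerfect2 s1 s2 := by
  rintro ⟨s1, s2, hs1m, hs2m, hmono1, hmono2, ⟨hBNE1, hBNE2⟩, ⟨G1, G2, hG, hP1, hP2⟩⟩
  have hdprob : ∀ t, IsProbabilityMeasure (Measure.dirac (s2 t)) := fun t => inferInstance
  have hdmeas : Measurable (alph fun t => Measure.dirac (s2 t)) := alph_dirac_meas hs2m
  -- BNE: a.e. high types play a10 or a11
  have hHigh : ∀ᵐ t1 : T01 ∂μ01, 1/2 < (t1:ℝ) → (s1 t1 = a10 ∨ s1 t1 = a11) := by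
    filter_upwards [hBNE1] with t1 hbr ht
    have h10 : W1 a10 t1 (fun t => Measure.dirac (s2 t)) = 7 :=
      W1_a10_high hdprob (not_le.mpr ht)
    rcases a1_cases (s1 t1) with h | h | h | h
    · exfalso
      have := hbr a10
      rw [h10, h] at this
      have := W1_a00_le_two hdprob hdmeas t1
      linarith
    · exfalso
      have := hbr a10
      rw [h10, h] at this
      have := W1_a01_le_two hdprob hdmeas t1
      linarith
    · exact Or.inl h
    · exact Or.inr h
  -- BNE: a.e. low types do not play a11
  have hLowne : ∀ᵐ t1 : T01 ∂μ01, (t1:ℝ) ≤ 1/2 → s1 t1 ≠ a11 := by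
    filter_upwards [hBNE1] with t1 hbr ht hcontra
    have h1 := hbr a00
    rw [hcontra] at h1
    have h2 := W1_a11_low hdprob hdmeas ht
    have h3 := W1_a00_low hdprob hdmeas t1
    linarith
  set E10 : Set T01 := {t : T01 | 1/2 < (t:ℝ) ∧ s1 t = a10} with hE10
  set E11 : Set T01 := {t : T01 | 1/2 < (t:ℝ) ∧ s1 t = a11} with hE11
  by_cases hA : μ01 E10 = 0
  · -- Case A : a.e. high types play a11, so player 2 plays act1, so a11 suboptimal
    have hnm : ∀ᵐ t1 : T01 ∂μ01, t1 ∉ E10 := by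
      rw [MeasureTheory.ae_iff]
      simpa using hA
    have hae : ∀ᵐ t1 : T01 ∂μ01, 1/2 < (t1:ℝ) → s1 t1 = a11 := by
      filter_upwards [hHigh, hnm] with t1 h1 h2 ht
      rcases h1 ht with h | h
      · exact absurd ⟨ht, h⟩ h2
      · exact h
    have hdiff : ∀ t2 : T01, (3:ℝ) ≤ W2 act1 t2 (fun t => Measure.dirac (s1 t))
        - W2 act2 t2 (fun t => Measure.dirac (s1 t)) := by
      intro t2
      rw [W2_diff hs1m t2]
      have hle : (3:ℝ) = ∫ t1, (if (t1:ℝ) ≤ 1/2 then (-2:ℝ) else 8) ∂μ01 := integ_step.symm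
      rw [hle]
      apply integral_mono_ae
      · exact integrable_bdd 8 (Measurable.ite measurableSet_le_half measurable_const
          measurable_const) (fun t => by split_ifs <;> norm_num)
      · exact integrable_bdd 8 (Measurable.ite (hs1m (measurableSet_singleton a11))
          measurable_const measurable_const) (fun t => by split_ifs <;> norm_num)
      · filter_upwards [hae] with t1 h1
        rcases le_or_gt ((t1:ℝ)) (1/2) with h | h
        · rw [if_pos h]; split_ifs <;> norm_num
        · rw [if_neg (not_le.mpr h), if_pos (h1 h)]
    have hs2ae : ∀ᵐ t2 : T01 ∂μ01, s2 t2 = act1 := by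
      filter_upwards [hBNE2] with t2 hbr
      rcases act_cases (s2 t2) with h | h
      · exact h
      · exfalso
        have h1 := hbr act1
        rw [h] at h1
        have := hdiff t2
        linarith
    have hq : ∫ t, alph (fun t => Measure.dirac (s2 t)) t ∂μ01 = 1 := by
      rw [integral_congr_ae (g := fun _ : T01 => (1:ℝ)) ?_, integ_const]
      filter_upwards [hs2ae] with t h
      rw [alph_dirac, if_pos h]
    obtain ⟨t1, ht1, hbr, him⟩ := exists_good gt_half_ne_zero (hBNE1.and hae)
    have hs1t1 : s1 t1 = a11 := him ht1
    have h1 := hbr a10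
    rw [hs1t1, W1_a10_high hdprob (not_le.mpr ht1),
      W1_a11_high hdprob hdmeas (not_le.mpr ht1), hq] at h1
    norm_num at h1
  by_cases hB : μ01 E11 = 0
  · -- Case B : a.e. nobody plays a11, so player 2 plays act2, so a10 suboptimal
    have hnm : ∀ᵐ t1 : T01 ∂μ01, t1 ∉ E11 := by
      rw [MeasureTheory.ae_iff]
      simpa using hB
    have hae : ∀ᵐ t1 : T01 ∂μ01, s1 t1 ≠ a11 := by
      filter_upwards [hHigh, hLowne, hnm] with t1 h1 h2 h3
      rcases le_or_gt ((t1:ℝ)) (1/2) with h | h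
      · exact h2 h
      · intro hcontra
        exact h3 ⟨h, hcontra⟩
    have hdiff : ∀ t2 : T01, W2 act1 t2 (fun t => Measure.dirac (s1 t))
        - W2 act2 t2 (fun t => Measure.dirac (s1 t)) = -2 := by
      intro t2
      rw [W2_diff hs1m t2]
      rw [integral_congr_ae (g := fun _ : T01 => (-2:ℝ)) ?_, integ_const]
      filter_upwards [hae] with t h
      rw [if_neg h]
    have hs2ae : ∀ᵐ t2 : T01 ∂μ01, s2 t2 = act2 := by
      filter_upwards [hBNE2] with t2 hbr
      rcases act_cases (s2 t2) with h | h
      · exfalso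
        have h1 := hbr act2
        rw [h] at h1
        have := hdiff t2
        linarith
      · exact h
    have hq : ∫ t, alph (fun t => Measure.dirac (s2 t)) t ∂μ01 = 0 := by
      rw [integral_congr_ae (g := fun _ : T01 => (0:ℝ)) ?_, integ_const]
      filter_upwards [hs2ae] with t h
      rw [alph_dirac, if_neg (h ▸ act1_ne_act2.symm)]
    obtain ⟨t1, ht1, hbr, him, hnm1⟩ := exists_good gt_half_ne_zero (hBNE1.and (hHigh.and hnm))
    have hs1t1 : s1 t1 = a10 := by
      rcases him ht1 with h | h
      · exact h
      · exact absurd ⟨ht1, h⟩ hnm1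
    have h1 := hbr a11
    rw [hs1t1, W1_a10_high hdprob (not_le.mpr ht1),
      W1_a11_high hdprob hdmeas (not_le.mpr ht1), hq] at h1
    norm_num at h1
  · -- Case C : both a10 and a11 played by high types with positive measure
    have hP1' : ∀ᵐ t1 : T01 ∂μ01,
        Tendsto (fun k => infDist (s1 t1) (BR1 t1 (G2 k))) atTop (nhds 0) :=
      hP1.mono fun t1 h => h.2
    obtain ⟨ta, hta, htend_a⟩ := exists_good hA hP1'
    obtain ⟨tb, htb, htend_b⟩ := exists_good hB hP1'
    obtain ⟨tc, htc, htend_c⟩ := exists_good le_half_ne_zero hP1'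
    obtain ⟨k, ⟨hka, hkb⟩, hkc⟩ :=
      (((eventually_mem_BR1 htend_a).and (eventually_mem_BR1 htend_b)).and
        (eventually_mem_BR1 htend_c)).exists
    have hprob : ∀ t, IsProbabilityMeasure (G2 k t) := ((hG k).2.1).1
    have hmeas : Measurable (alph (G2 k)) :=
      (((hG k).2.1).2 {act1} (measurableSet_singleton _)).ennreal_toReal
    have hcm : IsCompletelyMixed (G2 k) := (hG k).2.2.2
    -- q = 7/8
    have h1 : W1 a11 ta (G2 k) ≤ W1 a10 ta (G2 k) := by
      have := hka a11
      rwa [hta.2] at this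
    have h2 : W1 a10 tb (G2 k) ≤ W1 a11 tb (G2 k) := by
      have := hkb a10
      rwa [htb.2] at this
    rw [W1_a10_high hprob (not_le.mpr hta.1), W1_a11_high hprob hmeas (not_le.mpr hta.1)] at h1
    rw [W1_a10_high hprob (not_le.mpr htb.1), W1_a11_high hprob hmeas (not_le.mpr htb.1)] at h2
    have hq : ∫ t, alph (G2 k) t ∂μ01 = 7/8 := by linarith
    -- strict dominance of a01 at tc
    have hstrict := key_strict hprob hmeas hcm hq
    have hdiff := W1_diff_low hprob hmeas tc
    have hge1 := W1_a01_ge_one hprob hmeas tc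
    have hc01 : s1 tc = a01 := by
      have hbc := hkc a01
      rcases a1_cases (s1 tc) with h | h | h | h
      · exfalso
        rw [h] at hbc
        linarith
      · exact h
      · exfalso
        rw [h, W1_a10_low hprob htc] at hbc
        linarith
      · exfalso
        rw [h] at hbc
        have := W1_a11_low hprob hmeas htc
        linarith
    -- monotonicity contradiction
    have hle : tc ≤ ta := by
      have : (tc:ℝ) ≤ (ta:ℝ) := le_trans htc (le_of_lt hta.1)
      exact Subtype.coe_le_coe.mp this
    have := hmono1 hle
    rw [hc01, hta.2] at this
    exact not_a01_le_a10 this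

end MainProof

/-- **Claim.**  The bi-dimensional example game has no perfect monotone equilibrium. -/
theorem example2_no_perfect_monotone_equilibrium :
    ¬ ∃ (s1 : T01 → A1sp) (s2 : T01 → Act12),
        Measurable s1 ∧ Measurable s2 ∧ Monotone s1 ∧ Monotone s2 ∧
        IsBNE2 s1 s2 ∧ IsPerfect2 s1 s2 := by
  exact main_aux

end

end MonotonePerfection
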